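/- Let a_m = 2 if m is odd and a_m = 1 if m is even. Then for every m ≥ 1, |bP_{4m}| = 2^{2m-2} (2^{2m-1} - 1) * numerator(4 B_m / m) equals 2^{2m-2} (2^{2m-1} - 1) * a_m * numerator(B_m / (4m)), where B_m denotes the m-th Bernoulli number in the convention B_1 = 1/6 and numerator means numerator in lowest terms. -/

import Mathlib

/-!
By von Staudt–Clausen, `B_{2m} + 1/2` is a `2`-adic integer, so `v₂(B_m) = -1` and the reduced
denominator of `q = B_m / (4m)` has `v₂ = v₂(m) + 3`. Now `4 B_m / m = 16 q`, and multiplying the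
reduced fraction `q` by `16` multiplies its numerator by `16 / gcd(16, den q)`, which is `2` for odd
`m` and `1` for even `m`.
-/

/-- Hirzebruch's convention: `B m = (-1)^(m+1) * bernoulli (2m)`, so `B 1 = 1/6`. -/
def hirzebruchB (m : ℕ) : ℚ := (-1) ^ (m + 1) * bernoulli (2 * m)

/-- `a_m = 2` for `m` odd and `a_m = 1` for `m` even. -/
def aCoeff (m : ℕ) : ℕ := if Odd m then 2 else 1

open Finset

lemma padicNorm_one_div_natCast_of_not_dvd {p : ℕ} [Fact p.Prime] {n : ℕ} (hn : ¬ p ∣ n) :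
    padicNorm p (1 / n) = 1 := by
  rw [padicNorm.div, padicNorm.one, (padicNorm.nat_eq_one_iff n).2 hn, div_one]

lemma padicNorm_two_bernoulli_two_mul {k : ℕ} (hk : k ≠ 0) :
    padicNorm 2 (bernoulli (2 * k)) = 2 := by
  obtain ⟨z, hz⟩ := Bernoulli.vonStaudt_clausen k
  set P := {p ∈ range (2 * k + 2) | p.Prime ∧ (p - 1) ∣ 2 * k}
  have h2P : 2 ∈ P := by simp [P, Nat.prime_two]; omega
  set w : ℚ := z - ∑ p ∈ P.erase 2, 1 / (p : ℚ)
  have hw : padicNorm 2 w ≤ 1 := by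
    refine (padicNorm.sub ..).trans
      (max_le (padicNorm.of_int z) (padicNorm.sum_le' ?_ zero_le_one))
    intro p hp
    obtain ⟨hp2, hpP⟩ := mem_erase.1 hp
    have hprime : p.Prime := (mem_filter.1 hpP).2.1
    rw [padicNorm_one_div_natCast_of_not_dvd]
    exact fun h => hp2 ((Nat.prime_dvd_prime_iff_eq Nat.prime_two hprime).1 h).symm
  have hB : bernoulli (2 * k) = w + -(1 / 2) := by
    rw [← sum_erase_add P _ h2P] at hz
    simp only [w, hz]
    push_cast
    ring
  have hhalf : padicNorm 2 (-(1 / 2 : ℚ)) = 2 := by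
    have h : padicNorm 2 (2 : ℚ) = 2⁻¹ := by
      exact_mod_cast padicNorm.padicNorm_p_of_prime (p := 2)
    rw [padicNorm.neg, padicNorm.div, padicNorm.one, h, one_div, inv_inv]
  rw [hB, padicNorm.add_eq_max_of_ne (by linarith), hhalf, max_eq_right (by linarith)]

lemma padicValRat_two_bernoulli_two_mul {k : ℕ} (hk : k ≠ 0) :
    padicValRat 2 (bernoulli (2 * k)) = -1 := by
  have hnorm := padicNorm_two_bernoulli_two_mul hk
  have hB0 : bernoulli (2 * k) ≠ 0 := fun h => by simp [h] at hnorm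
  rw [padicNorm.eq_zpow_of_nonzero hB0] at hnorm
  have := zpow_right_injective₀ (by norm_num : (0 : ℚ) < 2) (by norm_num)
    (hnorm.trans (zpow_one 2).symm)
  omega

lemma padicValRat_two_hirzebruchB {m : ℕ} (hm : m ≠ 0) : padicValRat 2 (hirzebruchB m) = -1 := by
  rcases neg_one_pow_eq_or ℚ (m + 1) with h | h <;>
    simp [hirzebruchB, h, padicValRat.neg, padicValRat_two_bernoulli_two_mul hm]

theorem padicValNat_den_of_padicValRat_neg {p : ℕ} [Fact p.Prime] {q : ℚ}
    (hq : padicValRat p q < 0) : (padicValNat p q.den : ℤ) = -padicValRat p q := by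
  have hden : p ∣ q.den := by
    by_contra h
    have := padicValRat_def p q
    simp [padicValNat.eq_zero_of_not_dvd h] at this
    omega
  have hnum : padicValInt p q.num = 0 := by
    refine padicValInt.eq_zero_of_not_dvd fun h => ?_
    exact Nat.not_coprime_of_dvd_of_dvd (Fact.out : p.Prime).one_lt
      (Int.natAbs_dvd_natAbs.2 h) hden q.reduced
  rw [padicValRat_def, hnum]
  ring

theorem Rat.natAbs_num_natCast_mul (n : ℕ) (q : ℚ) :
    ((n : ℚ) * q).num.natAbs = n / n.gcd q.den * q.num.natAbs := by
  have hgcd : (n * q.num.natAbs).gcd q.den = n.gcd q.den :=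
    Nat.Coprime.gcd_mul_right_cancel n q.reduced
  rw [Rat.mul_num, Rat.num_natCast, Rat.den_natCast, one_mul, Int.natAbs_mul, Int.natAbs_natCast,
    hgcd, Int.natAbs_ediv_of_dvd, Int.natAbs_mul]
  · simp [Nat.div_mul_right_comm (Nat.gcd_dvd_left n q.den)]
  · exact (Int.natCast_dvd_natCast.2 (Nat.gcd_dvd_left _ _)).mul_right _

lemma padicValNat_two_den_hirzebruchB_div {m : ℕ} (hm : m ≠ 0) :
    padicValNat 2 (hirzebruchB m / (4 * m)).den = padicValNat 2 m + 3 := by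
  have hB : hirzebruchB m ≠ 0 := fun h => by simpa [h] using padicValRat_two_hirzebruchB hm
  have hval : padicValRat 2 (hirzebruchB m / (4 * m)) = -(padicValNat 2 m + 3) := by
    have h4 : (4 : ℚ) = ((2 : ℕ) : ℚ) ^ 2 := by norm_num
    rw [padicValRat.div hB (by positivity), padicValRat.mul (by positivity) (by positivity), h4,
      padicValRat.pow, padicValRat.self one_lt_two, padicValRat.of_nat,
      padicValRat_two_hirzebruchB hm]
    ring
  have := padicValNat_den_of_padicValRat_neg (hval.trans_lt (by omega))
  omega

lemma sixteen_div_gcd_eq_aCoeff {m d : ℕ} (hm : m ≠ 0) (hd : d ≠ 0)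
    (hv : padicValNat 2 d = padicValNat 2 m + 3) : 16 / Nat.gcd 16 d = aCoeff m := by
  obtain ⟨e, rfl⟩ : 2 ^ 3 ∣ d := (padicValNat_dvd_iff_le hd).2 (by omega)
  have he : e ≠ 0 := right_ne_zero_of_mul hd
  have hparity : Even e ↔ Even m := by
    rw [padicValNat.mul (by norm_num) he, padicValNat.prime_pow] at hv
    rw [even_iff_two_dvd, even_iff_two_dvd, dvd_iff_padicValNat_ne_zero he,
      dvd_iff_padicValNat_ne_zero hm]
    omega
  rw [show 16 = 2 ^ 3 * 2 by norm_num, Nat.gcd_mul_left, aCoeff]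
  split_ifs with hodd
  · have : Odd e := Nat.not_even_iff_odd.1 (hparity.not.2 (Nat.not_even_iff_odd.2 hodd))
    rw [Nat.Coprime.gcd_eq_one (Nat.coprime_two_left.2 this)]
    norm_num
  · rw [Nat.gcd_eq_left (hparity.2 (Nat.not_odd_iff_even.1 hodd)).two_dvd]
    norm_num

lemma natAbs_num_four_mul_hirzebruchB_div {m : ℕ} (hm : m ≠ 0) :
    (4 * hirzebruchB m / m).num.natAbs = aCoeff m * (hirzebruchB m / (4 * m)).num.natAbs := by
  have h16 : 4 * hirzebruchB m / m = ((16 : ℕ) : ℚ) * (hirzebruchB m / (4 * m)) := by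
    push_cast
    ring
  rw [h16, Rat.natAbs_num_natCast_mul, sixteen_div_gcd_eq_aCoeff hm (Rat.den_ne_zero _)
    (padicValNat_two_den_hirzebruchB_div hm)]

/-- The two expressions for `|bP_{4m}|` agree:
`2^(2m-2) (2^(2m-1)-1) · numerator(4 B_m/m) = 2^(2m-2) (2^(2m-1)-1) · a_m · numerator(B_m/(4m))`,
where `numerator q` denotes the numerator of `|q|` in lowest terms. -/
theorem bP_order_formulas (m : ℕ) (hm : 1 ≤ m) :
    2 ^ (2 * m - 2) * (2 ^ (2 * m - 1) - 1) * (4 * hirzebruchB m / m).num.natAbs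
      = 2 ^ (2 * m - 2) * (2 ^ (2 * m - 1) - 1) * (aCoeff m *
          (hirzebruchB m / (4 * m)).num.natAbs) := by
  rw [natAbs_num_four_mul_hirzebruchB_div (by omega)]
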